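/- Let a, λ > 0, let w : [0, ∞) → ℝ be continuous, and suppose v : [0, τ) → (0, ∞) is differentiable and satisfies v'(t) ≤ -a v(t) - λ e^{w(t)} v(t)^{-2} with v(0) = B₀ > 0. If B(t) = e^{-a t}(B₀³ - 3λ ∫₀ᵗ e^{3 a s + w(s)} ds)^{1/3} is the solution of the corresponding Bernoulli equation with the same initial datum, then v(t) ≤ B(t) for all t in the common interval of existence. -/

import Mathlib

/-!
The substitution `u = e^{3at} v³` linearises the Bernoulli equation: it turns
`v' ≤ -a v - λ g v⁻²` into `u' ≤ -3λ e^{3at} g`. Hence the energy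
`e^{3at} v(t)³ + 3λ ∫₀ᵗ e^{3as} g(s) ds` is nonincreasing, so it stays below its value
`B₀³` at `t = 0`; for `g = e^w` this says `v(t)³ ≤ B(t)³`, and cubing is monotone.
-/

open intervalIntegral Real

lemma cube_mul_deriv_le_of_bernoulli {a lam g x x' : ℝ} (hx : x ≠ 0)
    (h : x' ≤ -a * x - lam * g * x ^ (-2 : ℤ)) :
    3 * x ^ 2 * x' ≤ -3 * a * x ^ 3 - 3 * lam * g :=
  calc 3 * x ^ 2 * x' ≤ 3 * x ^ 2 * (-a * x - lam * g * x ^ (-2 : ℤ)) := by gcongr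
    _ = -3 * a * x ^ 3 - 3 * lam * g := by field_simp

lemma le_exp_neg_mul_mul_rpow_of_exp_mul_cube_le {a t x C : ℝ} (hC : 0 ≤ C)
    (h : exp (3 * a * t) * x ^ 3 ≤ C) :
    x ≤ exp (-a * t) * C ^ ((1 : ℝ) / 3) := by
  have hcube : (exp (-a * t) * C ^ ((1 : ℝ) / 3)) ^ 3 = (exp (3 * a * t))⁻¹ * C := by
    rw [mul_pow, ← exp_nat_mul, ← rpow_natCast (C ^ _), ← rpow_mul hC, ← exp_neg]
    norm_num [mul_assoc]
  rwa [← Odd.pow_le_pow (n := 3) (by decide), hcube, le_inv_mul_iff₀ (exp_pos _)]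

noncomputable def bernoulliEnergy (a lam : ℝ) (g v : ℝ → ℝ) (s : ℝ) : ℝ :=
  exp (3 * a * s) * v s ^ 3 + 3 * lam * ∫ u in (0 : ℝ)..s, exp (3 * a * u) * g u

section Energy

variable {a lam τ : ℝ} {g v v' : ℝ → ℝ}

lemma hasDerivAt_bernoulliEnergy (hg : Continuous g) {t : ℝ} (hv : HasDerivAt v (v' t) t) :
    HasDerivAt (bernoulliEnergy a lam g v)
      (exp (3 * a * t) * (3 * a * v t ^ 3 + 3 * v t ^ 2 * v' t + 3 * lam * g t)) t := by
  have hexp : HasDerivAt (fun s ↦ exp (3 * a * s)) (exp (3 * a * t) * (3 * a)) t :=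
    ((hasDerivAt_id t).const_mul (3 * a)).exp.congr_deriv (by simp)
  have hint : HasDerivAt (fun s ↦ ∫ u in (0 : ℝ)..s, exp (3 * a * u) * g u)
      (exp (3 * a * t) * g t) t :=
    ((by fun_prop : Continuous fun u ↦ exp (3 * a * u) * g u)
      |>.integral_hasStrictDerivAt 0 t).hasDerivAt
  exact ((hexp.fun_mul (hv.fun_pow 3)).fun_add (hint.const_mul (3 * lam))).congr_deriv
    (by push_cast; ring)

lemma bernoulliEnergy_antitoneOn (hg : Continuous g)
    (hv_ne : ∀ t ∈ Set.Ico 0 τ, v t ≠ 0)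
    (hv_deriv : ∀ t ∈ Set.Ico 0 τ, HasDerivAt v (v' t) t)
    (hv_ineq : ∀ t ∈ Set.Ico 0 τ, v' t ≤ -a * v t - lam * g t * v t ^ (-2 : ℤ)) :
    AntitoneOn (bernoulliEnergy a lam g v) (Set.Ico 0 τ) := by
  have hderiv t (ht : t ∈ Set.Ico 0 τ) :=
    hasDerivAt_bernoulliEnergy (a := a) (lam := lam) hg (hv_deriv t ht)
  have hsub : interior (Set.Ico 0 τ) ⊆ Set.Ico 0 τ := interior_subset
  refine antitoneOn_of_hasDerivWithinAt_nonpos (convex_Ico 0 τ)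
    (fun t ht ↦ (hderiv t ht).continuousAt.continuousWithinAt)
    (fun t ht ↦ (hderiv t (hsub ht)).hasDerivWithinAt) fun t ht ↦ ?_
  have hcube := cube_mul_deriv_le_of_bernoulli (hv_ne t (hsub ht)) (hv_ineq t (hsub ht))
  exact mul_nonpos_of_nonneg_of_nonpos (exp_pos _).le (by linarith)

end Energy

theorem bernoulli_comparison_general (a lam B₀ τ : ℝ) (w : ℝ → ℝ) (hw : Continuous w)
    (v v' : ℝ → ℝ)
    (hv_pos : ∀ t ∈ Set.Ico (0:ℝ) τ, 0 < v t)
    (hv_deriv : ∀ t ∈ Set.Ico (0:ℝ) τ, HasDerivAt v (v' t) t)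
    (hv_ineq : ∀ t ∈ Set.Ico (0:ℝ) τ,
      v' t ≤ -a * v t - lam * Real.exp (w t) * (v t) ^ (-2 : ℤ))
    (hv0 : v 0 = B₀)
    (B : ℝ → ℝ)
    (hB : ∀ t, B t = Real.exp (-a * t) *
      (B₀ ^ 3 - 3 * lam * ∫ s in (0:ℝ)..t, Real.exp (3 * a * s + w s)) ^ ((1:ℝ)/3)) :
    ∀ t ∈ Set.Ico (0:ℝ) τ,
      0 < B₀ ^ 3 - 3 * lam * ∫ s in (0:ℝ)..t, Real.exp (3 * a * s + w s) →
      v t ≤ B t := by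
  intro t ht hC
  have h0 : (0 : ℝ) ∈ Set.Ico 0 τ := ⟨le_rfl, ht.1.trans_lt ht.2⟩
  have henergy := bernoulliEnergy_antitoneOn (continuous_exp.comp hw)
    (fun s hs ↦ (hv_pos s hs).ne') hv_deriv hv_ineq h0 ht ht.1
  simp only [bernoulliEnergy, Function.comp_apply, ← exp_add, mul_zero, exp_zero, integral_same,
    hv0] at henergy
  rw [hB]
  exact le_exp_neg_mul_mul_rpow_of_exp_mul_cube_le hC.le (by linarith)

/-- comparison principle: a positive differentiable `v` with
`v' ≤ -a v - λ e^{w t} v⁻²`, `v 0 = B₀`, stays below the Bernoulli solution `B`. -/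
theorem bernoulli_comparison (a lam B₀ τ : ℝ) (ha : 0 < a) (hlam : 0 < lam)
    (hB₀ : 0 < B₀) (w : ℝ → ℝ) (hw : Continuous w)
    (v v' : ℝ → ℝ)
    (hv_pos : ∀ t ∈ Set.Ico (0:ℝ) τ, 0 < v t)
    (hv_deriv : ∀ t ∈ Set.Ico (0:ℝ) τ, HasDerivAt v (v' t) t)
    (hv_ineq : ∀ t ∈ Set.Ico (0:ℝ) τ,
      v' t ≤ -a * v t - lam * Real.exp (w t) * (v t) ^ (-2 : ℤ))
    (hv0 : v 0 = B₀)
    (B : ℝ → ℝ)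
    (hB : ∀ t, B t = Real.exp (-a * t) *
      (B₀ ^ 3 - 3 * lam * ∫ s in (0:ℝ)..t, Real.exp (3 * a * s + w s)) ^ ((1:ℝ)/3)) :
    ∀ t ∈ Set.Ico (0:ℝ) τ,
      0 < B₀ ^ 3 - 3 * lam * ∫ s in (0:ℝ)..t, Real.exp (3 * a * s + w s) →
      v t ≤ B t :=
  bernoulli_comparison_general a lam B₀ τ w hw v v' hv_pos hv_deriv hv_ineq hv0 B hB
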